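/- Let $X_i = AS_i + H_i$ for $i \in \{k, l\}$ with $A$ invertible with columns $a_1,\dots,a_d$, $V = A^{-1}$ with rows $v_1,\dots,v_d$, $S_i$ independent of $H_i$, $\operatorname{Cov}(S_k), \operatorname{Cov}(S_l)$ diagonal, and $\operatorname{Cov}(H_k) = \operatorname{Cov}(H_l)$. Then for each $j$, $(\operatorname{Cov}(X_k) - \operatorname{Cov}(X_l)) v_j^\top = a_j (\operatorname{Var}(S^j_k) - \operatorname{Var}(S^j_l))$. -/

import Mathlib

/-!
Independence of `S` and `H` kills the cross-covariances, so `Cov(A S + H) = A Cov(S) Aᵀ + Cov(H)`.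
Under stationary confounding the `Cov(H)` terms cancel in `Cov(Xₖ) - Cov(Xₗ)`, leaving `A D Aᵀ`
with `D` diagonal; since `Aᵀ vⱼᵀ = eⱼ`, applying it to `vⱼᵀ` picks out `D j j • aⱼ`.
-/

open Matrix MeasureTheory ProbabilityTheory

/-- Covariance matrix `Cov(X, Y)` of two `ℝ^d`-valued random vectors. -/
noncomputable def covMat {Ω : Type*} [MeasurableSpace Ω] (μ : Measure Ω) {d : ℕ}
    (X Y : Ω → Fin d → ℝ) : Matrix (Fin d) (Fin d) ℝ :=
  Matrix.of fun i j =>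
    ∫ ω, (X ω i - ∫ ω', X ω' i ∂μ) * (Y ω j - ∫ ω', Y ω' j ∂μ) ∂μ

lemma Matrix.mul_isDiag_mul_transpose_mulVec_inv_row {n R : Type*} [Fintype n] [DecidableEq n]
    [CommRing R] {A D : Matrix n n R} (hA : IsUnit A) (hD : D.IsDiag) (j : n) :
    (A * D * Aᵀ) *ᵥ A⁻¹ j = fun i => A i j * D j j := by
  have hrow : Aᵀ *ᵥ A⁻¹ j = Pi.single j 1 := by
    rw [mulVec_transpose, ← mul_apply_eq_vecMul,
      nonsing_inv_mul A ((isUnit_iff_isUnit_det A).mp hA)]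
    ext k
    exact one_eq_pi_single
  rw [← mulVec_mulVec, ← mulVec_mulVec, hrow, ← hD.diagonal_diag, diagonal_mulVec_single,
    mulVec_single]
  ext i
  simp

section Covariance

variable {Ω : Type*} [MeasurableSpace Ω] {μ : Measure Ω} {d : ℕ} {X Y Z : Ω → Fin d → ℝ}

lemma covMat_apply (X Y : Ω → Fin d → ℝ) (i j : Fin d) :
    covMat μ X Y i j = cov[fun ω => X ω i, fun ω => Y ω j; μ] := rfl

lemma covMat_transpose (X Y : Ω → Fin d → ℝ) : (covMat μ X Y)ᵀ = covMat μ Y X := by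
  ext i j
  simp only [transpose_apply, covMat_apply, covariance_comm]

lemma memLp_mulVec_apply (A : Matrix (Fin d) (Fin d) ℝ) (hX : ∀ i, MemLp (fun ω => X ω i) 2 μ)
    (i : Fin d) : MemLp (fun ω => (A *ᵥ X ω) i) 2 μ := by
  simp only [mulVec, dotProduct]
  exact memLp_finsetSum _ fun k _ => (hX k).const_mul (A i k)

lemma ProbabilityTheory.IndepFun.covMat_eq_zero (h : IndepFun X Y μ)
    (hX : ∀ i, MemLp (fun ω => X ω i) 2 μ) (hY : ∀ i, MemLp (fun ω => Y ω i) 2 μ) :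
    covMat μ X Y = 0 := by
  ext i j
  exact (h.comp (measurable_pi_apply i) (measurable_pi_apply j)).covariance_eq_zero (hX i) (hY j)

variable [IsFiniteMeasure μ]

lemma covMat_add_left (hX : ∀ i, MemLp (fun ω => X ω i) 2 μ)
    (hY : ∀ i, MemLp (fun ω => Y ω i) 2 μ) (hZ : ∀ i, MemLp (fun ω => Z ω i) 2 μ) :
    covMat μ (X + Y) Z = covMat μ X Z + covMat μ Y Z := by
  ext i j
  exact covariance_add_left (hX i) (hY i) (hZ j)

lemma covMat_add_right (hX : ∀ i, MemLp (fun ω => X ω i) 2 μ)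
    (hY : ∀ i, MemLp (fun ω => Y ω i) 2 μ) (hZ : ∀ i, MemLp (fun ω => Z ω i) 2 μ) :
    covMat μ X (Y + Z) = covMat μ X Y + covMat μ X Z := by
  rw [← covMat_transpose, covMat_add_left hY hZ hX, transpose_add, covMat_transpose,
    covMat_transpose]

lemma covMat_mulVec_left (A : Matrix (Fin d) (Fin d) ℝ) (hX : ∀ i, MemLp (fun ω => X ω i) 2 μ)
    (hY : ∀ i, MemLp (fun ω => Y ω i) 2 μ) :
    covMat μ (fun ω => A *ᵥ X ω) Y = A * covMat μ X Y := by
  ext i j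
  simp only [covMat_apply, mul_apply, mulVec, dotProduct]
  rw [covariance_fun_sum_left (fun k => (hX k).const_mul (A i k)) (hY j)]
  simp only [covariance_const_mul_left]

lemma covMat_mulVec_right (B : Matrix (Fin d) (Fin d) ℝ) (hX : ∀ i, MemLp (fun ω => X ω i) 2 μ)
    (hY : ∀ i, MemLp (fun ω => Y ω i) 2 μ) :
    covMat μ X (fun ω => B *ᵥ Y ω) = covMat μ X Y * Bᵀ := by
  rw [← covMat_transpose, covMat_mulVec_left B hY hX, transpose_mul, covMat_transpose]

theorem covMat_mulVec_add_of_indepFun {S H : Ω → Fin d → ℝ}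
    (hS : ∀ i, MemLp (fun ω => S ω i) 2 μ) (hH : ∀ i, MemLp (fun ω => H ω i) 2 μ)
    (hSH : IndepFun S H μ) (A : Matrix (Fin d) (Fin d) ℝ) :
    covMat μ (fun ω => A *ᵥ S ω + H ω) (fun ω => A *ᵥ S ω + H ω) =
      A * covMat μ S S * Aᵀ + covMat μ H H := by
  have hAS := memLp_mulVec_apply A hS
  have hcovSH := hSH.covMat_eq_zero hS hH
  have hcovHS : covMat μ H S = 0 := by rw [← covMat_transpose, hcovSH, transpose_zero]
  change covMat μ ((fun ω => A *ᵥ S ω) + H) ((fun ω => A *ᵥ S ω) + H) = _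
  rw [covMat_add_left (Z := (fun ω => A *ᵥ S ω) + H) hAS hH fun i => (hAS i).add (hH i),
    covMat_add_right hAS hAS hH, covMat_add_right hH hAS hH, covMat_mulVec_left A hS hAS,
    covMat_mulVec_right A hS hS, covMat_mulVec_left A hS hH,
    covMat_mulVec_right A hH hS, hcovSH, hcovHS]
  simp [Matrix.mul_assoc]

end Covariance

theorem stmt9_general {Ω : Type*} [MeasurableSpace Ω] (μ : Measure Ω) [IsProbabilityMeasure μ]
    {d : ℕ} (Sk Sl Hk Hl : Ω → Fin d → ℝ)
    (hSk2 : ∀ i, MemLp (fun ω => Sk ω i) 2 μ)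
    (hSl2 : ∀ i, MemLp (fun ω => Sl ω i) 2 μ)
    (hHk2 : ∀ i, MemLp (fun ω => Hk ω i) 2 μ)
    (hHl2 : ∀ i, MemLp (fun ω => Hl ω i) 2 μ)
    (hindepk : IndepFun Sk Hk μ) (hindepl : IndepFun Sl Hl μ)
    (hdiagk : (covMat μ Sk Sk).IsDiag) (hdiagl : (covMat μ Sl Sl).IsDiag)
    (hstat : covMat μ Hk Hk = covMat μ Hl Hl)
    (A : Matrix (Fin d) (Fin d) ℝ) (hA : IsUnit A)
    (Xk Xl : Ω → Fin d → ℝ)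
    (hXk : ∀ ω, Xk ω = A.mulVec (Sk ω) + Hk ω)
    (hXl : ∀ ω, Xl ω = A.mulVec (Sl ω) + Hl ω)
    (V : Matrix (Fin d) (Fin d) ℝ) (hV : V = A⁻¹) :
    ∀ j i, (covMat μ Xk Xk - covMat μ Xl Xl).mulVec (fun k => V j k) i =
      A i j * (covMat μ Sk Sk j j - covMat μ Sl Sl j j) := by
  intro j i
  have hdiff : covMat μ Xk Xk - covMat μ Xl Xl =
      A * (covMat μ Sk Sk - covMat μ Sl Sl) * Aᵀ := by
    rw [funext hXk, funext hXl, covMat_mulVec_add_of_indepFun hSk2 hHk2 hindepk,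
      covMat_mulVec_add_of_indepFun hSl2 hHl2 hindepl, hstat, Matrix.mul_sub, Matrix.sub_mul]
    abel
  rw [hdiff, hV, mul_isDiag_mul_transpose_mulVec_inv_row hA (hdiagk.sub hdiagl)]
  rfl

/-- Under stationary confounding, `(Cov(Xₖ) - Cov(Xₗ)) vⱼᵀ = aⱼ (Var(Sʲₖ) - Var(Sʲₗ))`. -/
theorem stmt9 {Ω : Type*} [MeasurableSpace Ω] (μ : Measure Ω) [IsProbabilityMeasure μ]
    {d : ℕ} (Sk Sl Hk Hl : Ω → Fin d → ℝ)
    (hSkmeas : Measurable Sk) (hSlmeas : Measurable Sl)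
    (hHkmeas : Measurable Hk) (hHlmeas : Measurable Hl)
    (hSk2 : ∀ i, MemLp (fun ω => Sk ω i) 2 μ)
    (hSl2 : ∀ i, MemLp (fun ω => Sl ω i) 2 μ)
    (hHk2 : ∀ i, MemLp (fun ω => Hk ω i) 2 μ)
    (hHl2 : ∀ i, MemLp (fun ω => Hl ω i) 2 μ)
    (hindepk : IndepFun Sk Hk μ) (hindepl : IndepFun Sl Hl μ)
    (hdiagk : (covMat μ Sk Sk).IsDiag) (hdiagl : (covMat μ Sl Sl).IsDiag)
    (hstat : covMat μ Hk Hk = covMat μ Hl Hl)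
    (A : Matrix (Fin d) (Fin d) ℝ) (hA : IsUnit A)
    (Xk Xl : Ω → Fin d → ℝ)
    (hXk : ∀ ω, Xk ω = A.mulVec (Sk ω) + Hk ω)
    (hXl : ∀ ω, Xl ω = A.mulVec (Sl ω) + Hl ω)
    (V : Matrix (Fin d) (Fin d) ℝ) (hV : V = A⁻¹) :
    ∀ j i, (covMat μ Xk Xk - covMat μ Xl Xl).mulVec (fun k => V j k) i =
      A i j * (covMat μ Sk Sk j j - covMat μ Sl Sl j j) :=
  stmt9_general μ Sk Sl Hk Hl hSk2 hSl2 hHk2 hHl2 hindepk hindepl hdiagk hdiagl hstat A hA Xk Xl hXk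
    hXl V hV
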